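/- Fence-sequentialization soundness (key step): Let G be an execution graph and G' the graph obtained by merging two threads T1, T2 of G into one, placing all T1-events before an inserted sc-fence event f before all T2-events in program order. Then every edge (a,b) ∈ G.rfe with a ∈ T1 and b ∈ T2 (which becomes internal in G') satisfies (a,b) ∈ G'.(po;⦗F^sc⦘;po) and hence (a,b) ∈ G'.po_rc⁺ ∩ G'.ppo_asm⁺. -/
import Mathlib


/-- `po_rc := ⦗E \ W^nt⦘;po ∪ po;⦗RMW^tso ∪ F^≥sf⦘ ∪ po|loc;⦗W⦘`. -/
def poRc {α : Type*} (Wnt RMWtso Fsf Fsc W : Set α) (loc : α → ℕ)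
    (po : α → α → Prop) : α → α → Prop :=
  fun a b => (a ∉ Wnt ∧ po a b) ∨ (po a b ∧ b ∈ RMWtso ∪ (Fsf ∪ Fsc)) ∨
    (po a b ∧ loc a = loc b ∧ b ∈ W)

/-- `ppo_asm` of RC11^Ex86 (with `F^≥sf = F^sf ∪ F^sc`). -/
def ppoAsm {α : Type*} (Wnt RMWtso Fsf Fsc Rtso Wtso Rd : Set α)
    (po : α → α → Prop) : α → α → Prop :=
  fun a b =>
    (po a b ∧ b ∈ RMWtso ∪ (Fsf ∪ Fsc)) ∨
    (a ∈ Rtso ∪ RMWtso ∪ Fsc ∧ po a b) ∨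
    (a ∈ Fsf ∪ Fsc ∧ po a b ∧ b ∉ Rd) ∨
    (a ∈ Wtso ∧ po a b ∧ b ∉ Rd ∧ b ∉ Wnt) ∨
    (a ∉ Rd ∧ a ∉ Wnt ∧ po a b ∧ b ∈ Wtso)

/-- fence-sequentialization, key step: if the merged program
order `po'` places every `T1`-event before the inserted sc-fence `f` and `f`
before every `T2`-event, then every external reads-from edge from `T1` to `T2`
lies in `po';⦗F^sc⦘;po'` and hence in both `po_rc⁺` and `ppo_asm⁺` of the
merged graph. -/
theorem stmt16 {α : Type*} (Wnt RMWtso Fsf Fsc Rtso Wtso Rd W : Set α)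
    (loc : α → ℕ) (po' rfe : α → α → Prop) (T1 T2 : Set α) (f : α)
    (hFencePos : ∀ a b, a ∈ T1 → b ∈ T2 → po' a f ∧ po' f b)
    (hf : f ∈ Fsc) (hfNt : f ∉ Wnt) :
    ∀ a b, rfe a b → a ∈ T1 → b ∈ T2 →
      (∃ c, po' a c ∧ c ∈ Fsc ∧ po' c b) ∧
      Relation.TransGen (poRc Wnt RMWtso Fsf Fsc W loc po') a b ∧
      Relation.TransGen (ppoAsm Wnt RMWtso Fsf Fsc Rtso Wtso Rd po') a b := by
  intro a b _ ha hb
  obtain ⟨haf, hfb⟩ := hFencePos a b ha hb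
  refine ⟨⟨f, haf, hf, hfb⟩, ?_, ?_⟩
  · exact Relation.TransGen.head (Or.inr (Or.inl ⟨haf, Or.inr (Or.inr hf)⟩))
      (Relation.TransGen.single (Or.inl ⟨hfNt, hfb⟩))
  · exact Relation.TransGen.head (Or.inl ⟨haf, Or.inr (Or.inr hf)⟩)
      (Relation.TransGen.single (Or.inr (Or.inl ⟨Or.inr hf, hfb⟩)))
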